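/- arXiv:2510.17453 — 4 statements merged into one kernel-verified Lean document; each statement's English description precedes it below -/
import Mathlib

section
/- Let a₁, a₂, a₃, b₁, b₂, b₃ ∈ ℝ² be six mutually distinct points satisfying b₁ − a₁ = b₂ − a₂ = b₃ − a₃. Then one of these six points lies in the convex hull of some three of the remaining five points. -/
/-!
Write `v` for the common translation vector, so that the points are `aᵢ` and `aᵢ + v`, and
project the plane along `v` onto a line. One of the `aᵢ`, say `b`, projects between the other
two, `a` and `c`, so `b = p + l • v` with `p` on the segment `[a, c]`. For `l ≥ 1`, the point `b`
lies between `p + v ∈ [a + v, c + v]` and `b + v`, hence in the triangle `a + v, c + v, b + v`;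
for `0 ≤ l ≤ 1` it lies in the parallelogram `a, c, c + v, a + v`, hence in one of the two
triangles cut out by its diagonal from `a` to `c + v`. Negative `l` is the same picture with the
roles of `aᵢ` and `aᵢ + v` exchanged.
-/

open Module Set

theorem Set.mem_uIcc_or_mem_uIcc_or_mem_uIcc {α : Type*} [LinearOrder α] (a b c : α) :
    b ∈ uIcc a c ∨ a ∈ uIcc b c ∨ c ∈ uIcc a b := by
  simp only [mem_uIcc]
  grind

theorem Module.exists_ker_eq_span_singleton_of_finrank_eq_two {K E : Type*} [Field K]
    [AddCommGroup E] [Module K E] [FiniteDimensional K E] (hE : finrank K E = 2) {v : E}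
    (hv : v ≠ 0) : ∃ f : E →ₗ[K] K, LinearMap.ker f = K ∙ v := by
  have hquot : finrank K (E ⧸ K ∙ v) = finrank K K := by
    have := (K ∙ v).finrank_quotient_add_finrank
    rw [finrank_span_singleton hv, hE] at this
    rw [finrank_self]
    omega
  exact ⟨(LinearEquiv.ofFinrankEq _ _ hquot).toLinearMap ∘ₗ (K ∙ v).mkQ, by
    rw [LinearEquiv.ker_comp, Submodule.ker_mkQ]⟩

section

variable {E : Type*} [AddCommGroup E] [Module ℝ E]

theorem smul_add_smul_add_smul_mem_convexHull {x y z : E} {α β γ : ℝ} (hα : 0 ≤ α) (hβ : 0 ≤ β)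
    (hγ : 0 ≤ γ) (h : α + β + γ = 1) : α • x + β • y + γ • z ∈ convexHull ℝ {x, y, z} := by
  have hw : ∀ i ∈ Finset.univ, 0 ≤ ![α, β, γ] i := fun i _ => by fin_cases i <;> assumption
  have hz : ∀ i ∈ Finset.univ, ![x, y, z] i ∈ convexHull ℝ {x, y, z} := fun i _ =>
    subset_convexHull ℝ _ (by fin_cases i <;> simp)
  simpa [Fin.sum_univ_three] using
    (convex_convexHull ℝ _).sum_mem hw (by simpa [Fin.sum_univ_three] using h) hz

def HasPointInTriangle (s : Set E) : Prop :=
  ∃ x y z w : E, x ∈ s ∧ y ∈ s ∧ z ∈ s ∧ w ∈ s ∧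
    x ≠ y ∧ x ≠ z ∧ x ≠ w ∧ y ≠ z ∧ y ≠ w ∧ z ≠ w ∧ x ∈ convexHull ℝ {y, z, w}

namespace HasPointInTriangle

theorem mono {s t : Set E} (h : HasPointInTriangle s) (hst : s ⊆ t) : HasPointInTriangle t := by
  obtain ⟨x, y, z, w, hx, hy, hz, hw, hne⟩ := h
  exact ⟨x, y, z, w, hst hx, hst hy, hst hz, hst hw, hne⟩

theorem of_mem_convexHull {s : Set E} {x y z w : E} (hs : {x, y, z, w} ⊆ s)
    (hd : [x, y, z, w].Nodup) (hx : x ∈ convexHull ℝ {y, z, w}) : HasPointInTriangle s := by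
  simp only [insert_subset_iff, singleton_subset_iff] at hs
  simp only [List.nodup_cons, List.mem_cons, List.not_mem_nil, not_or] at hd
  obtain ⟨⟨hxy, hxz, hxw, -⟩, ⟨hyz, hyw, -⟩, ⟨hzw, -⟩, -⟩ := hd
  exact ⟨x, y, z, w, hs.1, hs.2.1, hs.2.2.1, hs.2.2.2, hxy, hxz, hxw, hyz, hyw, hzw, hx⟩

theorem of_mem_segment_add_nonneg_smul {a b c p v : E} {l : ℝ}
    (h : [a, b, c, a + v, b + v, c + v].Nodup) (hp : p ∈ segment ℝ a c) (hl : 0 ≤ l)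
    (hb : b = p + l • v) : HasPointInTriangle {a, b, c, a + v, b + v, c + v} := by
  obtain ⟨s, t, hs, ht, hst, rfl⟩ := hp
  obtain rfl : s = 1 - t := eq_sub_of_add_eq hst
  rcases le_total 1 l with h1 | h1
  · refine of_mem_convexHull (x := b) (y := b + v) (z := a + v) (w := c + v)
      (by simp [insert_subset_iff]) (by grind) ?_
    convert smul_add_smul_add_smul_mem_convexHull (x := b + v) (y := a + v) (z := c + v)
      (div_nonneg (sub_nonneg.2 h1) hl) (div_nonneg hs hl) (div_nonneg ht hl) ?_ using 1
    · rw [hb]; match_scalars <;> field_simp <;> ring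
    · field_simp; ring
  rcases le_total t l with h2 | h2
  · refine of_mem_convexHull (x := b) (y := a) (z := a + v) (w := c + v)
      (by simp [insert_subset_iff]) (by grind) ?_
    convert smul_add_smul_add_smul_mem_convexHull (x := a) (y := a + v) (z := c + v)
      (sub_nonneg.2 h1) (sub_nonneg.2 h2) ht (by ring) using 1
    rw [hb]; module
  · refine of_mem_convexHull (x := b) (y := a) (z := c) (w := c + v)
      (by simp [insert_subset_iff]) (by grind) ?_
    convert smul_add_smul_add_smul_mem_convexHull (x := a) (y := c) (z := c + v)
      hs (sub_nonneg.2 h2) hl (by ring) using 1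
    rw [hb]; module

theorem of_mem_segment_add_smul {a b c p v : E} {l : ℝ}
    (h : [a, b, c, a + v, b + v, c + v].Nodup) (hp : p ∈ segment ℝ a c)
    (hb : b = p + l • v) : HasPointInTriangle {a, b, c, a + v, b + v, c + v} := by
  rcases le_total 0 l with hl | hl
  · exact of_mem_segment_add_nonneg_smul h hp hl hb
  have hp' : p + v ∈ segment ℝ (a + v) (c + v) := by
    simpa only [add_comm _ v] using (mem_segment_translate ℝ v).2 hp
  have := of_mem_segment_add_nonneg_smul (b := b + v) (v := -v) (l := -l)
    (by simp only [add_neg_cancel_right]; exact h.perm (List.perm_append_comm (l₁ := [a, b, c])))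
    hp' (neg_nonneg.2 hl) (by rw [hb]; module)
  simp only [add_neg_cancel_right] at this
  exact this.mono (by simp [insert_subset_iff])

theorem of_apply_mem_uIcc {a b c v : E} {f : E →ₗ[ℝ] ℝ} (hf : LinearMap.ker f ≤ ℝ ∙ v)
    (h : [a, b, c, a + v, b + v, c + v].Nodup) (hb : f b ∈ uIcc (f a) (f c)) :
    HasPointInTriangle {a, b, c, a + v, b + v, c + v} := by
  rw [← segment_eq_uIcc, ← f.coe_toAffineMap, ← image_segment] at hb
  obtain ⟨p, hp, hfp⟩ := hb
  have hker : b - p ∈ LinearMap.ker f := by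
    rw [LinearMap.mem_ker, map_sub]
    exact sub_eq_zero.2 hfp.symm
  obtain ⟨l, hl⟩ := Submodule.mem_span_singleton.1 (hf hker)
  exact of_mem_segment_add_smul h hp (by rw [hl]; abel)

theorem of_nodup_translate [FiniteDimensional ℝ E] (hE : finrank ℝ E = 2) {a₁ a₂ a₃ v : E}
    (h : [a₁, a₂, a₃, a₁ + v, a₂ + v, a₃ + v].Nodup) :
    HasPointInTriangle {a₁, a₂, a₃, a₁ + v, a₂ + v, a₃ + v} := by
  have hv : v ≠ 0 := by
    rintro rfl
    simp at h
  obtain ⟨f, hf⟩ := exists_ker_eq_span_singleton_of_finrank_eq_two hE hv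
  rcases mem_uIcc_or_mem_uIcc_or_mem_uIcc (f a₁) (f a₂) (f a₃) with h₂ | h₁ | h₃
  · exact of_apply_mem_uIcc hf.le h h₂
  · exact (of_apply_mem_uIcc hf.le
      (h.perm ((List.Perm.swap a₂ a₁ [a₃]).append (List.Perm.swap _ _ _))) h₁).mono
      (by simp [insert_subset_iff])
  · exact (of_apply_mem_uIcc hf.le
      (h.perm (((List.Perm.swap a₃ a₂ []).cons a₁).append ((List.Perm.swap _ _ []).cons _)))
      h₃).mono (by simp [insert_subset_iff])

end HasPointInTriangle

end

theorem point_in_convex_hull_of_three_others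
    (a₁ a₂ a₃ b₁ b₂ b₃ : EuclideanSpace ℝ (Fin 2))
    (hdist : [a₁, a₂, a₃, b₁, b₂, b₃].Pairwise (· ≠ ·))
    (h₁₂ : b₁ - a₁ = b₂ - a₂) (h₂₃ : b₂ - a₂ = b₃ - a₃) :
    ∃ x y z w : EuclideanSpace ℝ (Fin 2),
      x ∈ ({a₁, a₂, a₃, b₁, b₂, b₃} : Set (EuclideanSpace ℝ (Fin 2))) ∧
      y ∈ ({a₁, a₂, a₃, b₁, b₂, b₃} : Set (EuclideanSpace ℝ (Fin 2))) ∧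
      z ∈ ({a₁, a₂, a₃, b₁, b₂, b₃} : Set (EuclideanSpace ℝ (Fin 2))) ∧
      w ∈ ({a₁, a₂, a₃, b₁, b₂, b₃} : Set (EuclideanSpace ℝ (Fin 2))) ∧
      x ≠ y ∧ x ≠ z ∧ x ≠ w ∧ y ≠ z ∧ y ≠ w ∧ z ≠ w ∧
      x ∈ convexHull ℝ ({y, z, w} : Set (EuclideanSpace ℝ (Fin 2))) := by
  obtain ⟨v, rfl, rfl, rfl⟩ : ∃ v, b₁ = a₁ + v ∧ b₂ = a₂ + v ∧ b₃ = a₃ + v :=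
    ⟨b₁ - a₁, by abel, by rw [h₁₂]; abel, by rw [h₁₂, h₂₃]; abel⟩
  exact HasPointInTriangle.of_nodup_translate finrank_euclideanSpace_fin hdist
end

section
/- Let Γ ⊆ ℝ² be a set such that every line intersects Γ in at most two points and such that for every a ∈ Γ there exists n_a ∈ ℝ² with n_a · (b − a) < 0 for all b ∈ Γ \ {a} (supporting line property). Then for any two distinct vectors v₁, v₂ ∈ ℝ², the intersection (v₁ + Γ) ∩ (v₂ + Γ) consists of at most two points. -/
/-!
If `v₁ + Γ` and `v₂ + Γ` shared three points, then with `d = v₁ - v₂` three points `a ∈ Γ` would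
have `a + d ∈ Γ` as well. By the line condition their coordinates transversal to `d` are distinct,
so one of them, `a₂`, lies strictly between the other two, and some positive combination of
`a₁ - a₂` and `a₃ - a₂` is a multiple `l • d`. The supporting normal at `a₂` then forces `l > 0`,
while the supporting normal at `a₂ + d` forces `l < 0`.
-/

open Set

theorem Set.exists_lt_lt_of_two_lt_encard {α : Type*} [LinearOrder α] {s : Set α}
    (hs : 2 < s.encard) : ∃ x ∈ s, ∃ y ∈ s, ∃ z ∈ s, x < y ∧ y < z := by
  obtain ⟨t, hts, ht⟩ := exists_subset_encard_eq (Order.add_one_le_of_lt hs)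
  obtain ⟨a, b, c, hab, hac, hbc, rfl⟩ := encard_eq_three.1 ht
  have ha : a ∈ s := hts (by simp)
  have hb : b ∈ s := hts (by simp)
  have hc : c ∈ s := hts (by simp)
  wlog hlt : a < b generalizing a b
  · exact this b a hab.symm hbc hac (by rwa [insert_comm]) (by rwa [insert_comm]) hb ha
      (hab.symm.lt_of_le (not_lt.1 hlt))
  rcases lt_or_gt_of_ne hac with hac | hca
  · rcases lt_or_gt_of_ne hbc with hbc | hcb
    · exact ⟨a, ha, b, hb, c, hc, hlt, hbc⟩
    · exact ⟨a, ha, c, hc, b, hb, hac, hcb⟩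
  · exact ⟨c, hc, a, ha, b, hb, hca, hlt⟩

section Line

variable {E : Type*} [AddCommGroup E] [Module ℝ E]

theorem eq_zero_or_eq_one_of_add_smul_mem {Γ : Set E}
    (hline : ∀ p d : E, d ≠ 0 → ({x | ∃ t : ℝ, x = p + t • d} ∩ Γ).encard ≤ 2)
    {x d : E} (hd : d ≠ 0) (hx : x ∈ Γ) (hxd : x + d ∈ Γ) {t : ℝ} (ht : x + t • d ∈ Γ) :
    t = 0 ∨ t = 1 := by
  by_contra! h
  have hsub : (fun s : ℝ => x + s • d) '' {0, 1, t} ⊆ {y | ∃ s : ℝ, y = x + s • d} ∩ Γ := by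
    rintro _ ⟨s, hs, rfl⟩
    refine ⟨⟨s, rfl⟩, ?_⟩
    rcases hs with rfl | rfl | rfl <;> simpa
  have hinj : Function.Injective (fun s : ℝ => x + s • d) :=
    (add_right_injective x).comp (smul_left_injective ℝ hd)
  have h3 : ({0, 1, t} : Set ℝ).encard = 3 :=
    encard_eq_three.2 ⟨0, 1, t, zero_ne_one, h.1.symm, h.2.symm, rfl⟩
  have := (encard_le_encard hsub).trans (hline x d hd)
  rw [hinj.encard_image, h3] at this
  norm_num at this

end Line

section InnerProductSpace

variable {E : Type*} [NormedAddCommGroup E] [InnerProductSpace ℝ E]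

open RealInnerProductSpace

theorem real_inner_smul_add_smul_neg {n u v : E} (hu : ⟪n, u⟫ < 0) (hv : ⟪n, v⟫ < 0)
    {α β : ℝ} (hα : 0 < α) (hβ : 0 < β) : ⟪n, α • u + β • v⟫ < 0 := by
  rw [inner_add_right, real_inner_smul_right, real_inner_smul_right]
  nlinarith

theorem smul_sub_add_smul_sub_ne_smul {Γ : Set E}
    (hsupp : ∀ a ∈ Γ, ∃ n : E, ∀ b ∈ Γ, b ≠ a → ⟪n, b - a⟫ < 0)
    {a b c d : E} (hd : d ≠ 0) (ha : a ∈ Γ) (had : a + d ∈ Γ) (hb : b ∈ Γ) (hbd : b + d ∈ Γ)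
    (hc : c ∈ Γ) (hcd : c + d ∈ Γ) (hba : b ≠ a) (hca : c ≠ a)
    {α β : ℝ} (hα : 0 < α) (hβ : 0 < β) (l : ℝ) :
    α • (b - a) + β • (c - a) ≠ l • d := by
  intro hl
  obtain ⟨n, hn⟩ := hsupp a ha
  obtain ⟨m, hm⟩ := hsupp (a + d) had
  have hnd : ⟪n, d⟫ < 0 := by simpa using hn (a + d) had (by simpa using hd)
  have hmd : ⟪m, -d⟫ < 0 := by simpa using hm a ha (by simpa using hd)
  have hm' : ∀ x, x + d ∈ Γ → x ≠ a → ⟪m, x - a⟫ < 0 := fun x hxd hxa => by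
    simpa using hm (x + d) hxd (by simpa using hxa)
  have hnl := real_inner_smul_add_smul_neg (hn b hb hba) (hn c hc hca) hα hβ
  have hml := real_inner_smul_add_smul_neg (hm' b hbd hba) (hm' c hcd hca) hα hβ
  rw [hl, real_inner_smul_right] at hnl hml
  rw [inner_neg_right] at hmd
  nlinarith

end InnerProductSpace

section Plane

local notation "ℝ²" => EuclideanSpace ℝ (Fin 2)

def cross (d x : ℝ²) : ℝ := d 0 * x 1 - d 1 * x 0

theorem exists_eq_smul_of_cross_eq_zero {d w : ℝ²} (hd : d ≠ 0) (hw : cross d w = 0) :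
    ∃ l : ℝ, w = l • d := by
  unfold cross at hw
  by_cases h0 : d 0 = 0
  · have h1 : d 1 ≠ 0 := fun h1 => hd (by ext i; fin_cases i <;> simp [h0, h1])
    refine ⟨w 1 / d 1, ?_⟩
    ext i
    fin_cases i
    · simp only [h0, zero_mul, zero_sub, neg_eq_zero, mul_eq_zero, h1, false_or] at hw
      simp [h0, hw]
    · simp [h1]
  · refine ⟨w 0 / d 0, ?_⟩
    ext i
    fin_cases i
    · simp [h0]
    · show w 1 = w 0 / d 0 * d 1
      field_simp
      linarith

theorem injOn_cross {Γ : Set ℝ²}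
    (hline : ∀ p d : ℝ², d ≠ 0 → ({x | ∃ t : ℝ, x = p + t • d} ∩ Γ).encard ≤ 2)
    {d : ℝ²} (hd : d ≠ 0) : InjOn (cross d) {a | a ∈ Γ ∧ a + d ∈ Γ} := by
  rintro x ⟨hx, hxd⟩ y ⟨hy, hyd⟩ hxy
  obtain ⟨l, hl⟩ := exists_eq_smul_of_cross_eq_zero hd (w := y - x) (by
    simp only [cross, PiLp.sub_apply] at hxy ⊢
    linarith)
  have hy' : x + l • d = y := by rw [← hl]; abel
  have hl₀ := eq_zero_or_eq_one_of_add_smul_mem hline hd hx hxd (hy' ▸ hy)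
  have hl₁ := eq_zero_or_eq_one_of_add_smul_mem hline hd hx hxd (t := l + 1)
    (by rwa [add_smul, one_smul, ← add_assoc, hy'])
  have hl0 : l = 0 := by rcases hl₀ with h | h <;> rcases hl₁ with h' | h' <;> linarith
  rw [← hy', hl0, zero_smul, add_zero]

theorem encard_setOf_mem_and_add_mem_le_two {Γ : Set ℝ²}
    (hline : ∀ p d : ℝ², d ≠ 0 → ({x | ∃ t : ℝ, x = p + t • d} ∩ Γ).encard ≤ 2)
    (hsupp : ∀ a ∈ Γ, ∃ n : ℝ², ∀ b ∈ Γ, b ≠ a → inner ℝ n (b - a) < (0 : ℝ))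
    {d : ℝ²} (hd : d ≠ 0) : {a | a ∈ Γ ∧ a + d ∈ Γ}.encard ≤ 2 := by
  by_contra! h
  rw [← (injOn_cross hline hd).encard_image] at h
  obtain ⟨_, ⟨a₁, ⟨h₁, h₁d⟩, rfl⟩, _, ⟨a₂, ⟨h₂, h₂d⟩, rfl⟩, _, ⟨a₃, ⟨h₃, h₃d⟩, rfl⟩, h₁₂, h₂₃⟩ :=
    exists_lt_lt_of_two_lt_encard h
  obtain ⟨l, hl⟩ := exists_eq_smul_of_cross_eq_zero hd
    (w := (cross d a₃ - cross d a₂) • (a₁ - a₂) + (cross d a₂ - cross d a₁) • (a₃ - a₂))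
    (by simp only [cross, PiLp.add_apply, PiLp.smul_apply, PiLp.sub_apply, smul_eq_mul]; ring)
  exact smul_sub_add_smul_sub_ne_smul hsupp hd h₂ h₂d h₁ h₁d h₃ h₃d
    (ne_of_apply_ne _ h₁₂.ne) (ne_of_apply_ne _ h₂₃.ne') (sub_pos.2 h₂₃) (sub_pos.2 h₁₂) l hl

end Plane

theorem translates_intersect_in_at_most_two_points
    (Γ : Set (EuclideanSpace ℝ (Fin 2)))
    (hline : ∀ p d : EuclideanSpace ℝ (Fin 2), d ≠ 0 →
      ({x | ∃ t : ℝ, x = p + t • d} ∩ Γ).encard ≤ 2)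
    (hsupp : ∀ a ∈ Γ, ∃ n : EuclideanSpace ℝ (Fin 2),
      ∀ b ∈ Γ, b ≠ a → inner ℝ n (b - a) < (0 : ℝ))
    (v₁ v₂ : EuclideanSpace ℝ (Fin 2)) (hv : v₁ ≠ v₂) :
    (((v₁ + ·) '' Γ) ∩ ((v₂ + ·) '' Γ)).encard ≤ 2 := by
  have hsub : ((v₁ + ·) '' Γ) ∩ ((v₂ + ·) '' Γ) ⊆
      (v₁ + ·) '' {a | a ∈ Γ ∧ a + (v₁ - v₂) ∈ Γ} := by
    rintro _ ⟨⟨a, ha, rfl⟩, b, hb, hab⟩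
    refine ⟨a, ⟨ha, ?_⟩, rfl⟩
    convert hb using 1
    calc a + (v₁ - v₂) = v₁ + a - v₂ := by abel
      _ = b := by rw [← show v₂ + b = v₁ + a from hab]; abel
  calc _ ≤ _ := encard_le_encard hsub
    _ ≤ _ := encard_image_le _ _
    _ ≤ 2 := encard_setOf_mem_and_add_mem_le_two hline hsupp (sub_ne_zero.2 hv)
end

section
/- Let A ⊆ ℝ² be measurable, let n ∈ ℕ, and let (f_r)_{r ∈ {0,1}^n} be functions each equal to either 𝟙_A or 𝟙_{ℝ²}, with at least one equal to 𝟙_A. Then the joint upper Banach density satisfies δ̄((f_r)_r) ≤ C_n · δ̄(A)^{(n+1)/2^n}, where δ̄(A) is the upper Banach density of A. -/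
open MeasureTheory

/-- The axis-parallel square `z + [0,R]²`. -/
def cube (z : EuclideanSpace ℝ (Fin 2)) (R : ℝ) : Set (EuclideanSpace ℝ (Fin 2)) :=
  {x | ∀ i, x i ∈ Set.Icc (z i) (z i + R)}

/-- Upper Banach density of a planar set. -/
noncomputable def banachDensity (A : Set (EuclideanSpace ℝ (Fin 2))) : ℝ :=
  Filter.limsup
    (fun R : ℝ => ⨆ z : EuclideanSpace ℝ (Fin 2),
      (volume (A ∩ cube z R)).toReal / R ^ 2) Filter.atTop

/-- The normalized hypercubic average appearing in the joint upper Banach density. -/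
noncomputable def jointAvg (n : ℕ)
    (f : (Fin n → Bool) → EuclideanSpace ℝ (Fin 2) → ℝ)
    (z : EuclideanSpace ℝ (Fin 2)) (R r : ℝ) : ℝ :=
  (2 * r) ^ (-(2 * (n : ℝ))) * R ^ (-2 : ℝ) *
    ∫ x in cube z R, ∫ v in {v : Fin n → EuclideanSpace ℝ (Fin 2) |
        ∀ i j, |v i j| ≤ r},
      ∏ s : Fin n → Bool, f s (x + ∑ i, if s i then v i else 0)

/-- The joint upper Banach density of a family of functions. -/
noncomputable def jointDensity (n : ℕ)
    (f : (Fin n → Bool) → EuclideanSpace ℝ (Fin 2) → ℝ) : ℝ :=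
  ⨆ (M : ℝ) (_ : 1 ≤ M),
    Filter.limsup
      (fun R : ℝ => ⨆ z : EuclideanSpace ℝ (Fin 2),
        ⨅ r : {r : ℝ // M ≤ r ∧ r ≤ R / 2 ^ n}, jointAvg n f z R r)
      Filter.atTop

/-!
Since `(n + 1) / 2 ^ n ≤ 1` and `δ̄(A) ≤ 1`, it suffices to prove `δ̄((f_s)_s) ≤ δ̄(A)`, so `C = 1`
works. If `f_{s₀} = 𝟙_A`, the product over the vertices is at most `𝟙_A (x + w(v))`, where `w(v)`
is the vertex `s₀` of the parallelepiped spanned by `v`. By Fubini, integrating this over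
`x ∈ z + [0,R]²` first gives the mass of `A` in the translated square `z + w(v) + [0,R]²`, which is
at most `R²` times the maximal density of `A` in squares of side `R`; averaging over `v` keeps
this bound, and letting `R → ∞` gives `δ̄(A)`.
-/

open Filter Set

local notation "ℝ²" => EuclideanSpace ℝ (Fin 2)

lemma cube_eq_preimage_pi (z : ℝ²) (R : ℝ) :
    cube z R = (MeasurableEquiv.toLp 2 (Fin 2 → ℝ)).symm ⁻¹'
      univ.pi fun i => Icc (z i) (z i + R) := by
  ext x
  simp [cube, Pi.le_def, forall_and]

lemma volume_cube (z : ℝ²) (R : ℝ) : volume (cube z R) = ENNReal.ofReal R ^ 2 := by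
  rw [cube_eq_preimage_pi, (EuclideanSpace.volume_preserving_symm_measurableEquiv_toLp
    (Fin 2)).measure_preimage (MeasurableSet.univ_pi fun _ => measurableSet_Icc).nullMeasurableSet,
    volume_pi_pi]
  simp [Real.volume_Icc]

lemma preimage_add_right_cube (z y : ℝ²) (R : ℝ) : (· + y) ⁻¹' cube (z + y) R = cube z R := by
  ext x
  simp only [cube, mem_preimage, mem_ofPred_eq, mem_Icc, PiLp.add_apply]
  exact forall_congr' fun i => and_congr (by simp) (by rw [add_right_comm, add_le_add_iff_right])

lemma measureReal_inter_cube_le_sq (A : Set ℝ²) (z : ℝ²) (R : ℝ) :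
    volume.real (A ∩ cube z R) ≤ R ^ 2 := by
  have hcube : volume.real (cube z R) = max R 0 ^ 2 := by
    simp [measureReal_def, volume_cube, ENNReal.toReal_ofReal']
  calc volume.real (A ∩ cube z R) ≤ volume.real (cube z R) :=
        measureReal_mono inter_subset_right (by simp [volume_cube])
    _ = max R 0 ^ 2 := hcube
    _ ≤ R ^ 2 := by rcases le_total R 0 with h | h <;> simp [h, sq_nonneg]

lemma volume_setOf_forall_abs_le (ι κ : Type*) [Fintype ι] [Fintype κ] (r : ℝ) :
    volume {v : κ → EuclideanSpace ℝ ι | ∀ i j, |v i j| ≤ r} =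
      ENNReal.ofReal (2 * r) ^ (Fintype.card ι * Fintype.card κ) := by
  have hpi : {v : κ → EuclideanSpace ℝ ι | ∀ i j, |v i j| ≤ r} =
      univ.pi fun _ => (MeasurableEquiv.toLp 2 (ι → ℝ)).symm ⁻¹' univ.pi fun _ => Icc (-r) r := by
    ext v
    simp [Set.mem_pi, abs_le, Pi.le_def, forall_and]
  rw [hpi, volume_pi_pi]
  simp_rw [(EuclideanSpace.volume_preserving_symm_measurableEquiv_toLp ι).measure_preimage
    (MeasurableSet.univ_pi fun _ => measurableSet_Icc).nullMeasurableSet, volume_pi_pi,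
    Real.volume_Icc]
  simp [pow_mul, two_mul]

/-- `banachDensity A` is, by definition, `limsup (maxSquareDensity A) atTop`. -/
noncomputable def maxSquareDensity (A : Set ℝ²) (R : ℝ) : ℝ :=
  ⨆ z : ℝ², (volume (A ∩ cube z R)).toReal / R ^ 2

lemma maxSquareDensity_nonneg (A : Set ℝ²) (R : ℝ) : 0 ≤ maxSquareDensity A R :=
  Real.iSup_nonneg fun _ => by positivity

lemma maxSquareDensity_le_one (A : Set ℝ²) (R : ℝ) : maxSquareDensity A R ≤ 1 :=
  Real.iSup_le (fun z => div_le_one_of_le₀ (measureReal_inter_cube_le_sq A z R) (sq_nonneg R))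
    zero_le_one

lemma measureReal_inter_cube_le_mul_maxSquareDensity (A : Set ℝ²) (z : ℝ²) (R : ℝ) :
    volume.real (A ∩ cube z R) ≤ R ^ 2 * maxSquareDensity A R := by
  rcases eq_or_ne R 0 with rfl | hR
  · simpa using measureReal_inter_cube_le_sq A z 0
  have hbdd : BddAbove (range fun z => (volume (A ∩ cube z R)).toReal / R ^ 2) :=
    ⟨1, forall_mem_range.2 fun z =>
      div_le_one_of_le₀ (measureReal_inter_cube_le_sq A z R) (sq_nonneg R)⟩
  calc volume.real (A ∩ cube z R) = R ^ 2 * ((volume (A ∩ cube z R)).toReal / R ^ 2) := by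
        field_simp; rfl
    _ ≤ R ^ 2 * maxSquareDensity A R := by gcongr; exact le_ciSup hbdd z

lemma banachDensity_nonneg (A : Set ℝ²) : 0 ≤ banachDensity A :=
  le_limsup_of_frequently_le (.of_forall fun R => maxSquareDensity_nonneg A R)
    (isBoundedUnder_of_eventually_le (.of_forall fun R => maxSquareDensity_le_one A R))

lemma banachDensity_le_one (A : Set ℝ²) : banachDensity A ≤ 1 :=
  limsup_le_of_le (isCoboundedUnder_le_of_le atTop fun R => maxSquareDensity_nonneg A R)
    (.of_forall fun R => maxSquareDensity_le_one A R)

lemma setIntegral_cube_indicator_add {A : Set ℝ²} (hA : MeasurableSet A) (z y : ℝ²) (R : ℝ) :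
    ∫ x in cube z R, A.indicator (1 : ℝ² → ℝ) (x + y) = volume.real (A ∩ cube (z + y) R) := by
  have hshift : Measurable (· + y : ℝ² → ℝ²) := measurable_add_const y
  have hcomp : ∀ x, A.indicator (1 : ℝ² → ℝ) (x + y) = ((· + y) ⁻¹' A).indicator 1 x :=
    fun x => (indicator_comp_right (· + y)).symm
  simp_rw [hcomp]
  rw [integral_indicator_one (hshift hA),
    measureReal_restrict_apply (hshift hA), ← preimage_add_right_cube z y R, ← preimage_inter,
    measureReal_def, measure_preimage_add_right, measureReal_def]

instance isFiniteMeasure_restrict_cube (z : ℝ²) (R : ℝ) :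
    IsFiniteMeasure (volume.restrict (cube z R)) :=
  isFiniteMeasure_restrict.2 (by simp [volume_cube])

lemma setIntegral_cube_integral_le_of_le_indicator {V : Type*} [MeasurableSpace V]
    (ν : Measure V) [IsFiniteMeasure ν] {A : Set ℝ²} (hA : MeasurableSet A) {w : V → ℝ²}
    (hw : Measurable w) {F : ℝ² → V → ℝ} (hF0 : ∀ x v, 0 ≤ F x v)
    (hFA : ∀ x v, F x v ≤ A.indicator 1 (x + w v)) (z : ℝ²) (R : ℝ) :
    ∫ x in cube z R, ∫ v, F x v ∂ν ≤ ν.real univ * (R ^ 2 * maxSquareDensity A R) := by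
  set Q : ℝ² × V → ℝ := fun p => A.indicator 1 (p.1 + w p.2)
  have hQ : Integrable Q ((volume.restrict (cube z R)).prod ν) := by
    refine .of_bound ?_ 1 (.of_forall fun p => ?_)
    · exact ((measurable_one.indicator hA).comp (measurable_fst.add (hw.comp measurable_snd)))
        |>.aestronglyMeasurable
    · exact (norm_indicator_le_norm_self _ _).trans (by simp)
  calc ∫ x in cube z R, ∫ v, F x v ∂ν ≤ ∫ x in cube z R, ∫ v, Q (x, v) ∂ν := by
        refine integral_mono_of_nonneg (.of_forall fun x => integral_nonneg (hF0 x))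
          hQ.integral_prod_left ?_
        filter_upwards [hQ.prod_right_ae] with x hx
        exact integral_mono_of_nonneg (.of_forall (hF0 x)) hx (.of_forall (hFA x))
    _ = ∫ v, (∫ x in cube z R, Q (x, v)) ∂ν := integral_integral_swap hQ
    _ ≤ ∫ _v, R ^ 2 * maxSquareDensity A R ∂ν := by
        refine integral_mono hQ.integral_prod_right (integrable_const _) fun v => ?_
        rw [show ∫ x in cube z R, Q (x, v) = _ from setIntegral_cube_indicator_add hA z (w v) R]
        exact measureReal_inter_cube_le_mul_maxSquareDensity A _ R
    _ = ν.real univ * (R ^ 2 * maxSquareDensity A R) := by rw [integral_const, smul_eq_mul]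

lemma prod_le_of_mem_Icc {ι : Type*} [Fintype ι] {g : ι → ℝ} (hg : ∀ i, g i ∈ Icc (0 : ℝ) 1)
    (i : ι) : ∏ j, g j ≤ g i := by
  classical
  simpa using Finset.prod_le_prod_of_subset_of_le_one (Finset.subset_univ {i})
    (fun j _ => (hg j).1) (fun j _ _ => (hg j).2)

lemma jointAvg_nonneg {n : ℕ} {f : (Fin n → Bool) → ℝ² → ℝ} (hf : ∀ s x, 0 ≤ f s x) (z : ℝ²)
    {R r : ℝ} (hR : 0 ≤ R) (hr : 0 ≤ r) : 0 ≤ jointAvg n f z R r :=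
  mul_nonneg (by positivity)
    (integral_nonneg fun _ => integral_nonneg fun _ => Finset.prod_nonneg fun s _ => hf s _)

lemma jointAvg_le_maxSquareDensity {n : ℕ} {A : Set ℝ²} (hA : MeasurableSet A)
    {f : (Fin n → Bool) → ℝ² → ℝ} (hf : ∀ s x, f s x ∈ Icc (0 : ℝ) 1) {s₀ : Fin n → Bool}
    (hs₀ : f s₀ = A.indicator 1) (z : ℝ²) {R r : ℝ} (hR : 0 < R) (hr : 0 < r) :
    jointAvg n f z R r ≤ maxSquareDensity A R := by
  set box := {v : Fin n → ℝ² | ∀ i j, |v i j| ≤ r}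
  have hbox : volume box = ENNReal.ofReal (2 * r) ^ (2 * n) := by
    rw [volume_setOf_forall_abs_le, Fintype.card_fin, Fintype.card_fin]
  have : IsFiniteMeasure (volume.restrict box) :=
    isFiniteMeasure_restrict.2 (hbox ▸ ENNReal.pow_ne_top ENNReal.ofReal_ne_top)
  have hint := setIntegral_cube_integral_le_of_le_indicator (volume.restrict box) hA
    (w := fun v => ∑ i, if s₀ i then v i else 0) (Finset.measurable_sum _ fun i _ => by
      cases s₀ i <;> simp only [Bool.false_eq_true, if_true, if_false] <;> fun_prop)
    (F := fun x v => ∏ s, f s (x + ∑ i, if s i then v i else 0))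
    (fun x v => Finset.prod_nonneg fun s _ => (hf s _).1)
    (fun x v => hs₀ ▸ prod_le_of_mem_Icc (fun s => hf s _) s₀) z R
  rw [measureReal_restrict_apply_univ, measureReal_def, hbox, ENNReal.toReal_pow,
    ENNReal.toReal_ofReal (by positivity)] at hint
  calc jointAvg n f z R r ≤ (2 * r) ^ (-(2 * (n : ℝ))) * R ^ (-2 : ℝ) *
        ((2 * r) ^ (2 * n) * (R ^ 2 * maxSquareDensity A R)) :=
        mul_le_mul_of_nonneg_left hint (by positivity)
    _ = maxSquareDensity A R := by
        rw [Real.rpow_neg (by positivity), Real.rpow_neg hR.le, Real.rpow_two,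
          show 2 * (n : ℝ) = ((2 * n : ℕ) : ℝ) by push_cast; ring, Real.rpow_natCast]
        field_simp

lemma jointDensity_le_banachDensity {n : ℕ} {A : Set ℝ²} (hA : MeasurableSet A)
    {f : (Fin n → Bool) → ℝ² → ℝ} (hf : ∀ s x, f s x ∈ Icc (0 : ℝ) 1) {s₀ : Fin n → Bool}
    (hs₀ : f s₀ = A.indicator 1) : jointDensity n f ≤ banachDensity A := by
  refine Real.iSup_le (fun M => Real.iSup_le (fun hM => ?_) (banachDensity_nonneg A))
    (banachDensity_nonneg A)
  have hM₀ : 0 < M := one_pos.trans_le hM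
  refine limsup_le_limsup ?_ (isCoboundedUnder_le_of_eventually_le atTop (x := 0) ?_)
    (isBoundedUnder_of_eventually_le (.of_forall fun R => maxSquareDensity_le_one A R))
  · filter_upwards [eventually_ge_atTop (2 ^ n * M)] with R hR
    have hR₀ : 0 < R := (by positivity : (0 : ℝ) < 2 ^ n * M).trans_le hR
    have hMR : M ≤ R / 2 ^ n := by rw [le_div_iff₀ (by positivity)]; linarith
    refine ciSup_le fun z => (ciInf_le ⟨0, forall_mem_range.2 fun r => ?_⟩ ⟨M, le_rfl, hMR⟩).trans
      (jointAvg_le_maxSquareDensity hA hf hs₀ z hR₀ hM₀)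
    exact jointAvg_nonneg (fun s x => (hf s x).1) z hR₀.le (hM₀.le.trans r.2.1)
  · filter_upwards [eventually_ge_atTop 0] with R hR
    exact Real.iSup_nonneg fun z => Real.iInf_nonneg fun r =>
      jointAvg_nonneg (fun s x => (hf s x).1) z hR (hM₀.le.trans r.2.1)

theorem jointDensity_upper_bound (n : ℕ) :
    ∃ C : ℝ, 0 < C ∧
      ∀ A : Set (EuclideanSpace ℝ (Fin 2)), MeasurableSet A →
        ∀ f : (Fin n → Bool) → EuclideanSpace ℝ (Fin 2) → ℝ,
          (∀ s, f s = A.indicator 1 ∨ f s = fun _ => 1) →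
          (∃ s, f s = A.indicator 1) →
          jointDensity n f ≤ C * banachDensity A ^ ((n + 1 : ℝ) / 2 ^ n) := by
  refine ⟨1, one_pos, fun A hA f hf ⟨s₀, hs₀⟩ => ?_⟩
  have hf01 (s : Fin n → Bool) (x : ℝ²) : f s x ∈ Icc (0 : ℝ) 1 := by
    rcases hf s with h | h <;> by_cases hx : x ∈ A <;> simp [h, hx]
  have hexp : (n + 1 : ℝ) / 2 ^ n ≤ 1 := by
    rw [div_le_one (by positivity), add_comm]
    simpa [one_add_one_eq_two] using one_add_mul_le_pow (a := (1 : ℝ)) (by norm_num) n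
  calc jointDensity n f ≤ banachDensity A := jointDensity_le_banachDensity hA hf01 hs₀
    _ ≤ 1 * banachDensity A ^ ((n + 1 : ℝ) / 2 ^ n) := by
      rw [one_mul]
      exact Real.self_le_rpow_of_le_one (banachDensity_nonneg A) (banachDensity_le_one A) hexp
end

section
/- Let E ⊆ ℝ² and t > 0, and consider the family T_t(E) = {S_t(e) ∩ E : e ∈ E} where S_t(e) = {y ∈ ℝ² : |e − y| = t}. Then for E = ℝ², the Vapnik–Chervonenkis dimension of T_t(ℝ²) equals 3, i.e., there is a 3-element subset of ℝ² shattered by the family of circles of radius t, and no 4-element subset of ℝ² is shattered by it. -/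
/-!
Every subset of a shattered set `C` is cut out by a circle of radius `t`; in particular some
circle `S(e)` contains all of `C` and some circle `S(f)` contains `C` minus one point `d` but
not `d`. Then `e ≠ f`, and two distinct circles in the plane meet in at most two points, so
`C` has at most three points. Conversely the triangle `(5, 0), (3, 4), (3, -4)` on a circle of
radius `5` is shattered by circles of radius `5`, and a homothety carries it to a triangle
shattered by circles of radius `t`.
-/

/-- A family of subsets `𝒯` shatters a set `C` if every subset of `C` is
cut out by a member of the family. -/
def Shatters {X : Type*} (𝒯 : Set (Set X)) (C : Set X) : Prop :=
  ∀ D ⊆ C, ∃ T ∈ 𝒯, T ∩ C = D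

open Metric Set
open scoped Pointwise

def spheresOfRadius (P : Type*) [PseudoMetricSpace P] (r : ℝ) : Set (Set P) :=
  {S | ∃ e : P, S = sphere e r}

namespace Shatters

variable {X Y : Type*} {𝒯 𝒯' : Set (Set X)} {C : Set X}

theorem mono (h𝒯 : 𝒯 ⊆ 𝒯') (h : Shatters 𝒯 C) : Shatters 𝒯' C := fun D hD =>
  let ⟨T, hT, hTD⟩ := h D hD
  ⟨T, h𝒯 hT, hTD⟩

theorem image {f : X → Y} (hf : f.Injective) (h : Shatters 𝒯 C) :
    Shatters (image f '' 𝒯) (f '' C) := by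
  intro D hD
  obtain ⟨T, hT, hTD⟩ := h (C ∩ f ⁻¹' D) inter_subset_left
  refine ⟨f '' T, mem_image_of_mem _ hT, ?_⟩
  rw [← image_inter hf, hTD, image_inter_preimage, inter_eq_right.mpr hD]

end Shatters

theorem shatters_triple_of_forall_bool {X : Type*} {𝒯 : Set (Set X)} {a b c : X}
    (h : ∀ pa pb pc : Bool, ∃ T ∈ 𝒯, (a ∈ T ↔ pa) ∧ (b ∈ T ↔ pb) ∧ (c ∈ T ↔ pc)) :
    Shatters 𝒯 {a, b, c} := by
  classical
  intro D hD
  obtain ⟨T, hT, ha, hb, hc⟩ := h (decide (a ∈ D)) (decide (b ∈ D)) (decide (c ∈ D))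
  refine ⟨T, hT, Subset.antisymm ?_ fun x hx => ⟨?_, hD hx⟩⟩
  · rintro x ⟨hxT, rfl | rfl | rfl⟩ <;> simp_all
  · rcases hD hx with rfl | rfl | rfl <;> simp_all

section Homothety

variable {E : Type*} [NormedAddCommGroup E] [NormedSpace ℝ E] {c : ℝ}

theorem image_smul_spheresOfRadius_subset (hc : 0 < c) (r : ℝ) :
    image (c • · : E → E) '' spheresOfRadius E r ⊆ spheresOfRadius E (c * r) := by
  rintro _ ⟨_, ⟨e, rfl⟩, rfl⟩
  exact ⟨c • e, by rw [image_smul, smul_sphere' hc.ne', Real.norm_of_nonneg hc.le]⟩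

theorem Shatters.smul_spheresOfRadius {r : ℝ} (hc : 0 < c) {C : Set E}
    (h : Shatters (spheresOfRadius E r) C) : Shatters (spheresOfRadius E (c * r)) (c • C) := by
  rw [← image_smul]
  exact (h.image (smul_right_injective E hc.ne')).mono (image_smul_spheresOfRadius_subset hc r)

end Homothety

open EuclideanGeometry in
theorem not_shatters_spheresOfRadius_of_ncard_eq_four {V P : Type*} [NormedAddCommGroup V]
    [InnerProductSpace ℝ V] [MetricSpace P] [NormedAddTorsor V P] [FiniteDimensional ℝ V]
    (hV : Module.finrank ℝ V = 2) (r : ℝ) {C : Set P} (hC : C.ncard = 4) :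
    ¬ Shatters (spheresOfRadius P r) C := by
  intro h
  obtain ⟨d, hd⟩ := nonempty_of_ncard_ne_zero (hC.trans_ne four_ne_zero)
  obtain ⟨_, ⟨e, rfl⟩, hCe⟩ := h C subset_rfl
  obtain ⟨_, ⟨f, rfl⟩, hCf⟩ := h (C \ {d}) sdiff_subset
  obtain ⟨a, b, c, hab, hac, hbc, habc⟩ : ∃ a b c, a ≠ b ∧ a ≠ c ∧ b ≠ c ∧ C \ {d} = {a, b, c} :=
    ncard_eq_three.mp (by rw [ncard_sdiff_singleton_of_mem hd, hC])
  have hef : e ≠ f := by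
    rintro rfl
    have : d ∈ C \ {d} := hCf ▸ ⟨inter_eq_right.mp hCe hd, hd⟩
    exact this.2 rfl
  have hon : ∀ x ∈ ({a, b, c} : Set P), dist x e = r ∧ dist x f = r := fun x hx =>
    have hx : x ∈ C \ {d} := habc ▸ hx
    ⟨inter_eq_right.mp hCe hx.1, (hCf ▸ hx : x ∈ sphere f r ∩ C).1⟩
  obtain ⟨hae, haf⟩ := hon a (by simp)
  obtain ⟨hbe, hbf⟩ := hon b (by simp)
  obtain ⟨hce, hcf⟩ := hon c (by simp)
  rcases eq_of_dist_eq_of_dist_eq_of_finrank_eq_two hV hef hab hae hbe hce haf hbf hcf with h | h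
  · exact hac h.symm
  · exact hbc h.symm

theorem mem_sphere_iff_sq_add_sq {x e : EuclideanSpace ℝ (Fin 2)} {r : ℝ} (hr : 0 ≤ r) :
    x ∈ sphere e r ↔ (x 0 - e 0) ^ 2 + (x 1 - e 1) ^ 2 = r ^ 2 := by
  rw [mem_sphere, ← sq_eq_sq₀ dist_nonneg hr, EuclideanSpace.dist_sq_eq, Fin.sum_univ_two,
    Real.dist_eq, Real.dist_eq, sq_abs, sq_abs]

/-- The centre of a circle of radius `5` through exactly the chosen vertices of the triangle
`(5, 0), (3, 4), (3, -4)`: for two vertices it is the intersection point other than the origin of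
the circles of radius `5` about them, for one vertex `p` it is `2 • p`. -/
def triangleCenter : Bool → Bool → Bool → EuclideanSpace ℝ (Fin 2)
  | true, true, true => !₂[0, 0]
  | true, true, false => !₂[8, 4]
  | true, false, true => !₂[8, -4]
  | false, true, true => !₂[6, 0]
  | true, false, false => !₂[10, 0]
  | false, true, false => !₂[6, 8]
  | false, false, true => !₂[6, -8]
  | false, false, false => !₂[25, 0]

theorem shatters_spheresOfRadius_five_triangle :
    Shatters (spheresOfRadius (EuclideanSpace ℝ (Fin 2)) 5) {!₂[5, 0], !₂[3, 4], !₂[3, -4]} :=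
  shatters_triple_of_forall_bool fun pa pb pc => ⟨_, ⟨triangleCenter pa pb pc, rfl⟩, by
    simp only [mem_sphere_iff_sq_add_sq (by norm_num : (0 : ℝ) ≤ 5)]
    cases pa <;> cases pb <;> cases pc <;> norm_num [triangleCenter]⟩

theorem exists_ncard_eq_three_shatters_spheresOfRadius {r : ℝ} (hr : 0 < r) :
    ∃ C : Set (EuclideanSpace ℝ (Fin 2)), C.ncard = 3 ∧
      Shatters (spheresOfRadius (EuclideanSpace ℝ (Fin 2)) r) C := by
  have hc : 0 < r / 5 := by positivity
  refine ⟨(r / 5) • {!₂[5, 0], !₂[3, 4], !₂[3, -4]}, ?_, ?_⟩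
  · rw [← image_smul, ncard_image_of_injective _ (smul_right_injective _ hc.ne')]
    refine ncard_eq_three.mpr ⟨_, _, _, ?_, ?_, ?_, rfl⟩ <;> norm_num
  · simpa [div_mul_cancel₀] using shatters_spheresOfRadius_five_triangle.smul_spheresOfRadius hc

theorem vc_dimension_of_circles (t : ℝ) (ht : 0 < t) :
    (∃ C : Set (EuclideanSpace ℝ (Fin 2)), C.ncard = 3 ∧
      Shatters {S | ∃ e : EuclideanSpace ℝ (Fin 2), S = Metric.sphere e t} C) ∧
    (∀ C : Set (EuclideanSpace ℝ (Fin 2)), C.ncard = 4 →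
      ¬ Shatters {S | ∃ e : EuclideanSpace ℝ (Fin 2), S = Metric.sphere e t} C) :=
  ⟨exists_ncard_eq_three_shatters_spheresOfRadius ht, fun _ hC =>
    not_shatters_spheresOfRadius_of_ncard_eq_four finrank_euclideanSpace_fin t hC⟩
end
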